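/- arXiv:2304.11566 — 5 statements merged into one kernel-verified Lean document; each statement's English description precedes it below -/
import Mathlib

section
/- Let e = [0,1] with barycentric coordinates λ0 = 1−t, λ1 = t, and let k ≥ 8. If u ∈ (λ0λ1)^5 P_{k−8}(e), then its second derivative u'' lies in (λ0λ1)^3 P_{k−6}(e) and satisfies ∫_e u'' q = 0 for every q ∈ P_1(e). Conversely, every p ∈ (λ0λ1)^3 P_{k−6}(e) orthogonal to P_1(e) equals u'' for a unique u ∈ (λ0λ1)^5 P_{k−8}(e); i.e., the sequence 0 → (λ0λ1)^5 P_{k−8}(e) → (λ0λ1)^3 P_{k−6}(e)/P_1(e) → 0 with map d²/dt² is an exact complex. -/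
/-!
Write `b = X (1 - X)`. If `b⁵ ∣ w` then `b³ ∣ w''`, and since `w` and `w'` vanish at `0` and `1`,
integrating by parts twice gives `∫₀¹ w'' q = 0` whenever `q'' = 0`. Conversely, let `F` be the
double antiderivative of `g = b³ p` with `F(0) = F'(0) = 0`; orthogonality of `g` to `1` and to `X`
yields `F'(1) = 0` and `F(1) = 0`. At `a ∈ {0, 1}`, `(X - a)³ ∣ F''` together with
`F'(a) = F(a) = 0` gives `(X - a)⁵ ∣ F`, hence `F = b⁵ v`. Uniqueness:
`(b⁵ u)'' = 0` forces `deg (b⁵ u) ≤ 2 < 10`.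
-/

open Polynomial

namespace Polynomial

section Antiderivative

variable {K : Type*} [Field K]

noncomputable def antiderivative (g : K[X]) : K[X] :=
  g.sum fun n a => C (a / (n + 1)) * X ^ (n + 1)

@[simp]
lemma derivative_antiderivative [CharZero K] (g : K[X]) : derivative (antiderivative g) = g := by
  conv_rhs => rw [← sum_C_mul_X_pow_eq g]
  simp only [antiderivative, Polynomial.sum, map_sum]
  refine Finset.sum_congr rfl fun n _ => ?_
  rw [derivative_C_mul_X_pow, Nat.add_sub_cancel]
  congr 2
  push_cast
  field_simp

@[simp]
lemma eval_zero_antiderivative (g : K[X]) : (antiderivative g).eval 0 = 0 := by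
  simp [antiderivative, Polynomial.sum, eval_finsetSum]

end Antiderivative

lemma pow_succ_dvd_of_pow_dvd_derivative {R : Type*} [CommRing R] [IsDomain R] [CharZero R]
    {F : R[X]} {a : R} {r : ℕ} (hdvd : (X - C a) ^ r ∣ derivative F) (ha : F.IsRoot a) :
    (X - C a) ^ (r + 1) ∣ F := by
  by_cases hF' : derivative F = 0
  · rw [eq_C_of_derivative_eq_zero hF'] at ha ⊢
    simp_all
  have hF : F ≠ 0 := by rintro rfl; simp at hF'
  have hr := (le_rootMultiplicity_iff hF').mpr hdvd
  rw [derivative_rootMultiplicity_of_root ha] at hr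
  have hpos := (rootMultiplicity_pos hF).mpr ha
  exact (le_rootMultiplicity_iff hF).mp (by omega)

lemma pow_dvd_derivative_derivative {R : Type*} [CommRing R] {p q : R[X]} {n : ℕ}
    (h : p ^ (n + 2) ∣ q) : p ^ n ∣ derivative (derivative q) := by
  simpa using pow_sub_one_dvd_derivative_of_pow_dvd (pow_sub_one_dvd_derivative_of_pow_dvd h)

lemma integral_eval_derivative (R : ℝ[X]) (a b : ℝ) :
    ∫ t in a..b, (derivative R).eval t = R.eval b - R.eval a :=
  intervalIntegral.integral_eq_sub_of_hasDerivAt (fun x _ => R.hasDerivAt x)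
    ((derivative R).continuous.intervalIntegrable _ _)

lemma integral_eval_derivative_derivative_mul {q : ℝ[X]} (hq : derivative (derivative q) = 0)
    (w : ℝ[X]) (a b : ℝ) :
    ∫ t in a..b, (derivative (derivative w)).eval t * q.eval t =
      (derivative w * q - w * derivative q).eval b -
        (derivative w * q - w * derivative q).eval a := by
  have hparts :
      derivative (derivative w) * q = derivative (derivative w * q - w * derivative q) := by
    simp only [derivative_sub, derivative_mul, hq]
    ring
  simp_rw [← eval_mul, hparts]
  exact integral_eval_derivative _ a b

lemma derivative_derivative_eq_zero_of_natDegree_le_one {R : Type*} [Semiring R] {q : R[X]}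
    (hq : q.natDegree ≤ 1) :
    derivative (derivative q) = 0 :=
  iterate_derivative_eq_zero (x := 2) (by omega)

end Polynomial

lemma natDegree_bubble_pow (n : ℕ) : ((X * (1 - X) : ℝ[X]) ^ n).natDegree = 2 * n := by
  have h : (X * (1 - X) : ℝ[X]).natDegree = 2 := by compute_degree!
  rw [natDegree_pow, h, mul_comm]

lemma bubble_pow_ne_zero (n : ℕ) : (X * (1 - X) : ℝ[X]) ^ n ≠ 0 := by
  refine pow_ne_zero _ fun h => ?_
  have h2 := congrArg (eval (1 / 2)) h
  norm_num at h2

lemma natDegree_le_of_natDegree_bubble_pow_mul_le {n m : ℕ} {p : ℝ[X]}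
    (h : ((X * (1 - X)) ^ n * p).natDegree ≤ 2 * n + m) : p.natDegree ≤ m := by
  rcases eq_or_ne p 0 with rfl | hp
  · simp
  rw [natDegree_mul (bubble_pow_ne_zero n) hp, natDegree_bubble_pow] at h
  omega

lemma natDegree_bubble_pow_mul_le (n : ℕ) (u : ℝ[X]) :
    ((X * (1 - X)) ^ n * u).natDegree ≤ 2 * n + u.natDegree :=
  natDegree_bubble_pow n ▸ natDegree_mul_le

lemma bubble_pow_dvd {n : ℕ} {F : ℝ[X]} (h0 : (X - C 0) ^ n ∣ F) (h1 : (X - C 1) ^ n ∣ F) :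
    (X * (1 - X)) ^ n ∣ F := by
  have hcop : IsCoprime ((X - C (0 : ℝ)) ^ n) ((X - C 1) ^ n) :=
    (isCoprime_X_sub_C_of_isUnit_sub (by norm_num)).pow
  have hb : (X * (1 - X) : ℝ[X]) ^ n = (-1) ^ n * ((X - C 0) ^ n * (X - C 1) ^ n) := by
    rw [← mul_pow, ← mul_pow]
    congr 1
    simp only [map_zero, map_one]
    ring
  rw [hb, (isUnit_neg_one.pow n).mul_left_dvd]
  exact hcop.mul_dvd h0 h1

lemma integral_eval_derivative_derivative_mul_eq_zero {w q : ℝ[X]} (hw : (X * (1 - X)) ^ 2 ∣ w)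
    (hq : q.natDegree ≤ 1) :
    ∫ t in (0 : ℝ)..1, (derivative (derivative w)).eval t * q.eval t = 0 := by
  obtain ⟨c, rfl⟩ := hw
  obtain ⟨c', hc'⟩ : X * (1 - X) ∣ derivative ((X * (1 - X)) ^ 2 * c) := by
    simpa using pow_sub_one_dvd_derivative_of_pow_dvd (dvd_mul_right ((X * (1 - X)) ^ 2) c)
  rw [integral_eval_derivative_derivative_mul
    (derivative_derivative_eq_zero_of_natDegree_le_one hq)]
  simp [hc']

lemma exists_derivative_derivative_bubble_pow_mul_eq (r : ℕ) (p : ℝ[X])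
    (horth : ∀ q : ℝ[X], q.natDegree ≤ 1 →
      ∫ t in (0 : ℝ)..1, ((X * (1 - X)) ^ r * p).eval t * q.eval t = 0) :
    ∃ v : ℝ[X], derivative (derivative ((X * (1 - X)) ^ (r + 2) * v)) = (X * (1 - X)) ^ r * p := by
  set g : ℝ[X] := (X * (1 - X)) ^ r * p
  set F := antiderivative (antiderivative g)
  have hF : derivative (derivative F) = g := by simp [F]
  have hF0 : F.eval 0 = 0 := eval_zero_antiderivative _
  have hF'0 : (derivative F).eval 0 = 0 := by simp [F]
  have hF'1 : (derivative F).eval 1 = 0 := by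
    have h := horth 1 (by simp)
    rw [← hF, integral_eval_derivative_derivative_mul (by simp)] at h
    simpa [hF'0] using h
  have hF1 : F.eval 1 = 0 := by
    have h := horth X natDegree_X_le
    rw [← hF, integral_eval_derivative_derivative_mul (by simp)] at h
    simpa [hF0, hF'1] using h
  have hroot {a : ℝ} (ha : (X * (1 - X) : ℝ[X]).IsRoot a) (hFa : F.IsRoot a)
      (hF'a : (derivative F).IsRoot a) :
      (X - C a) ^ (r + 2) ∣ F := by
    have hg : (X - C a) ^ r ∣ derivative (derivative F) :=
      hF ▸ (pow_dvd_pow_of_dvd (dvd_iff_isRoot.mpr ha) r).mul_right p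
    exact pow_succ_dvd_of_pow_dvd_derivative (pow_succ_dvd_of_pow_dvd_derivative hg hF'a) hFa
  obtain ⟨v, hv⟩ := bubble_pow_dvd (hroot (by simp) hF0 hF'0) (hroot (by simp) hF1 hF'1)
  exact ⟨v, hv ▸ hF⟩

lemma eq_of_derivative_derivative_bubble_pow_mul_eq {n : ℕ} (hn : 2 ≤ n) {u v : ℝ[X]}
    (h : derivative (derivative ((X * (1 - X)) ^ n * u)) =
      derivative (derivative ((X * (1 - X)) ^ n * v))) : u = v := by
  have h0 : derivative (derivative ((X * (1 - X)) ^ n * (u - v))) = 0 := by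
    rw [mul_sub, derivative_sub, derivative_sub, h, sub_self]
  have hdeg : ((X * (1 - X)) ^ n * (u - v)).natDegree <
      ((X * (1 - X) : ℝ[X]) ^ n).natDegree := by
    have := congrArg natDegree h0
    simp only [natDegree_derivative, natDegree_zero] at this
    rw [natDegree_bubble_pow]
    omega
  have := eq_zero_of_dvd_of_natDegree_lt (dvd_mul_right _ _) hdeg
  exact sub_eq_zero.mp ((mul_eq_zero.mp this).resolve_left (bubble_pow_ne_zero n))

/-- Exactness of the edge bubble complex
`0 → (λ0λ1)^5 P_{k-8}(e) → (λ0λ1)^3 P_{k-6}(e)/P_1(e) → 0` under `d²/dt²`,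
on the edge `e = [0,1]` with `λ0 = 1 - t`, `λ1 = t`. -/
theorem stmt_0 (k : ℕ) (hk : 8 ≤ k) :
    (∀ u1 : Polynomial ℝ, u1.natDegree ≤ k - 8 →
      (∃ p : Polynomial ℝ, p.natDegree ≤ k - 6 ∧
        derivative (derivative ((X * (1 - X)) ^ 5 * u1)) = (X * (1 - X)) ^ 3 * p) ∧
      (∀ q : Polynomial ℝ, q.natDegree ≤ 1 →
        ∫ t in (0:ℝ)..1,
          (derivative (derivative ((X * (1 - X)) ^ 5 * u1))).eval t * q.eval t = 0)) ∧
    (∀ p : Polynomial ℝ, p.natDegree ≤ k - 6 →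
      (∀ q : Polynomial ℝ, q.natDegree ≤ 1 →
        ∫ t in (0:ℝ)..1, ((X * (1 - X)) ^ 3 * p).eval t * q.eval t = 0) →
      ∃! u1 : Polynomial ℝ, u1.natDegree ≤ k - 8 ∧
        derivative (derivative ((X * (1 - X)) ^ 5 * u1)) = (X * (1 - X)) ^ 3 * p) := by
  refine ⟨fun u hu => ⟨?_, fun q hq => ?_⟩, fun p hp horth => ?_⟩
  · obtain ⟨p, hp⟩ : (X * (1 - X)) ^ 3 ∣ derivative (derivative ((X * (1 - X)) ^ 5 * u)) :=
      pow_dvd_derivative_derivative (dvd_mul_right _ u)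
    refine ⟨p, natDegree_le_of_natDegree_bubble_pow_mul_le (n := 3) ?_, hp⟩
    have := natDegree_bubble_pow_mul_le 5 u
    rw [← hp, natDegree_derivative, natDegree_derivative]
    omega
  · exact integral_eval_derivative_derivative_mul_eq_zero
      (dvd_mul_of_dvd_left (pow_dvd_pow _ (by norm_num)) u) hq
  · obtain ⟨v, hv⟩ := exists_derivative_derivative_bubble_pow_mul_eq 3 p horth
    refine ⟨v, ⟨natDegree_le_of_natDegree_bubble_pow_mul_le (n := 5) ?_, hv⟩,
      fun u hu => eq_of_derivative_derivative_bubble_pow_mul_eq (by norm_num)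
        (hu.2.trans hv.symm)⟩
    have hdeg := congrArg natDegree hv
    have := natDegree_bubble_pow_mul_le 3 p
    simp only [natDegree_derivative, Nat.reduceAdd] at hdeg
    omega
end

section
/- Let e = [0,1] with barycentric coordinates λ0 = 1−t, λ1 = t, and let k ≥ 7. The map d/dt sends (λ0λ1)^4 P_{k−7}(e) bijectively onto the L²-orthogonal complement of constants in (λ0λ1)^3 P_{k−6}(e); i.e., the sequence 0 → (λ0λ1)^4 P_{k−7}(e) → (λ0λ1)^3 P_{k−6}(e)/P_0(e) → 0 is an exact complex. -/
/-!
Write `B = X (1 - X)`. Forward: `(B⁴ u)' = B³ ((4 - 8X) u + B u')`, and `B⁴ u` vanishes at both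
endpoints, so its derivative has zero mean. Backward: if `q = B³ p` has zero mean, its
antiderivative `F` with `F(0) = 0` also vanishes at `1`; a root of `F` whose multiplicity in `F'`
is at least `3` has multiplicity at least `4` in `F`, so `B⁴ ∣ F`. Uniqueness holds because a
polynomial is determined by its derivative and its value at `0`, and the degrees match because
`deg (B⁴ u)' = deg u + 7`.
-/

open Polynomial

namespace Polynomial

theorem intervalIntegral_eval_derivative (f : ℝ[X]) (a b : ℝ) :
    ∫ t in a..b, f.derivative.eval t = f.eval b - f.eval a :=
  intervalIntegral.integral_eq_sub_of_hasDerivAt (fun x _ => f.hasDerivAt x)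
    (f.derivative.continuous.intervalIntegrable a b)

theorem exists_derivative_eq {K : Type*} [Field K] [CharZero K] (q : K[X]) :
    ∃ F : K[X], derivative F = q := by
  induction q using Polynomial.induction_on' with
  | add p q hp hq =>
    obtain ⟨F, rfl⟩ := hp
    obtain ⟨G, rfl⟩ := hq
    exact ⟨F + G, derivative_add⟩
  | monomial n a =>
    refine ⟨C (a / (n + 1)) * X ^ (n + 1), ?_⟩
    rw [derivative_C_mul_X_pow, ← C_mul_X_pow_eq_monomial, Nat.add_sub_cancel]
    push_cast
    rw [div_mul_cancel₀ _ (Nat.cast_add_one_ne_zero n)]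

theorem exists_derivative_eq_of_eval_eq_zero {K : Type*} [Field K] [CharZero K]
    (q : K[X]) (c : K) : ∃ F : K[X], derivative F = q ∧ F.eval c = 0 := by
  obtain ⟨F, hF⟩ := q.exists_derivative_eq
  exact ⟨F - C (F.eval c), by simp [hF], by simp⟩

section CharZero

variable {R : Type*} [CommRing R] [IsDomain R] [CharZero R]

theorem eq_of_derivative_eq_of_eval_eq {f g : R[X]} {c : R}
    (h : derivative f = derivative g) (hc : f.eval c = g.eval c) : f = g := by
  have hconst := eq_C_of_derivative_eq_zero (p := f - g) (by rw [derivative_sub, h, sub_self])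
  have h0 : (f - g).coeff 0 = 0 := by
    simpa [hc, eq_comm] using congrArg (eval c) hconst
  rw [h0, C_0, sub_eq_zero] at hconst
  exact hconst

theorem pow_succ_dvd_of_isRoot_of_pow_dvd_derivative {F : R[X]} {c : R} {n : ℕ}
    (hroot : F.IsRoot c) (hdvd : (X - C c) ^ n ∣ derivative F) :
    (X - C c) ^ (n + 1) ∣ F := by
  rcases eq_or_ne F 0 with rfl | hF
  · exact dvd_zero _
  have hF' : derivative F ≠ 0 := fun h => by
    rw [eq_C_of_derivative_eq_zero h, IsRoot.def, eval_C] at hroot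
    exact hF (by rw [eq_C_of_derivative_eq_zero h, hroot, C_0])
  have hmult := derivative_rootMultiplicity_of_root hroot
  have hpos := (rootMultiplicity_pos hF).mpr hroot
  have hn := (le_rootMultiplicity_iff hF').mpr hdvd
  exact (le_rootMultiplicity_iff hF).mp (by omega)

theorem bubble_pow_succ_dvd {F : R[X]} {n : ℕ} (h0 : F.eval 0 = 0) (h1 : F.eval 1 = 0)
    (hdvd : (X * (1 - X)) ^ n ∣ derivative F) : (X * (1 - X)) ^ (n + 1) ∣ F := by
  have hdvd0 : (X - C 0) ^ (n + 1) ∣ F :=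
    pow_succ_dvd_of_isRoot_of_pow_dvd_derivative h0 <|
      dvd_trans ⟨(1 - X) ^ n, by rw [C_0, sub_zero, mul_pow]⟩ hdvd
  have hdvd1 : (X - C 1) ^ (n + 1) ∣ F :=
    pow_succ_dvd_of_isRoot_of_pow_dvd_derivative h1 <|
      dvd_trans ⟨(-X) ^ n, by rw [C_1, ← mul_pow]; ring⟩ hdvd
  have hcop : IsCoprime ((X - C 0) ^ (n + 1) : R[X]) ((X - C 1) ^ (n + 1)) :=
    (isCoprime_X_sub_C_of_isUnit_sub (by simp)).pow
  refine dvd_trans ⟨(-1) ^ (n + 1), ?_⟩ (hcop.mul_dvd hdvd0 hdvd1)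
  rw [C_0, C_1, sub_zero, ← mul_pow, ← mul_pow]
  ring

end CharZero

section Bubble

variable {R : Type*} [CommRing R]

theorem derivative_bubble_pow_succ_mul (n : ℕ) (u : R[X]) :
    derivative ((X * (1 - X)) ^ (n + 1) * u) =
      (X * (1 - X)) ^ n * (C ((n : R) + 1) * (1 - 2 * X) * u + X * (1 - X) * derivative u) := by
  simp only [derivative_mul, derivative_pow, derivative_sub, derivative_X, derivative_one]
  push_cast
  ring

theorem natDegree_bubble [IsDomain R] : (X * (1 - X) : R[X]).natDegree = 2 := by
  compute_degree!

theorem bubble_ne_zero [IsDomain R] : (X * (1 - X) : R[X]) ≠ 0 :=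
  ne_zero_of_natDegree_gt (n := 0) (by rw [natDegree_bubble]; omega)

theorem natDegree_eq_of_derivative_bubble_pow_mul [IsDomain R] [CharZero R] {n : ℕ}
    {u p : R[X]} (h : derivative ((X * (1 - X)) ^ (n + 1) * u) = (X * (1 - X)) ^ n * p)
    (hu : u ≠ 0) : p.natDegree = u.natDegree + 1 := by
  have hB : ∀ m, (X * (1 - X) : R[X]) ^ m ≠ 0 := fun m => pow_ne_zero m bubble_ne_zero
  have hp : p ≠ 0 := by
    rintro rfl
    refine mul_ne_zero (hB (n + 1)) hu (eq_of_derivative_eq_of_eval_eq (c := 0) ?_ ?_) <;>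
      simp [h]
  have := congrArg natDegree h
  rw [natDegree_derivative, natDegree_mul (hB _) hu, natDegree_mul (hB _) hp,
    natDegree_pow, natDegree_pow, natDegree_bubble] at this
  omega

end Bubble

end Polynomial

/-- Exactness of the edge bubble complex
`0 → (λ0λ1)^4 P_{k-7}(e) → (λ0λ1)^3 P_{k-6}(e)/P_0(e) → 0` under `d/dt`,
on the edge `e = [0,1]` with `λ0 = 1 - t`, `λ1 = t`. -/
theorem stmt_1 (k : ℕ) (hk : 7 ≤ k) :
    (∀ u1 : Polynomial ℝ, u1.natDegree ≤ k - 7 →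
      (∃ p : Polynomial ℝ, p.natDegree ≤ k - 6 ∧
        derivative ((X * (1 - X)) ^ 4 * u1) = (X * (1 - X)) ^ 3 * p) ∧
      (∫ t in (0:ℝ)..1, (derivative ((X * (1 - X)) ^ 4 * u1)).eval t = 0)) ∧
    (∀ p : Polynomial ℝ, p.natDegree ≤ k - 6 →
      (∫ t in (0:ℝ)..1, ((X * (1 - X)) ^ 3 * p).eval t = 0) →
      ∃! u1 : Polynomial ℝ, u1.natDegree ≤ k - 7 ∧
        derivative ((X * (1 - X)) ^ 4 * u1) = (X * (1 - X)) ^ 3 * p) := by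
  refine ⟨fun u hu => ⟨⟨_, ?_, derivative_bubble_pow_succ_mul 3 u⟩, ?_⟩, fun p hp hint => ?_⟩
  · rcases eq_or_ne u 0 with rfl | hu0
    · simp
    · have := natDegree_eq_of_derivative_bubble_pow_mul (derivative_bubble_pow_succ_mul 3 u) hu0
      omega
  · rw [intervalIntegral_eval_derivative]; simp
  obtain ⟨F, hF, hF0⟩ := exists_derivative_eq_of_eval_eq_zero ((X * (1 - X)) ^ 3 * p) 0
  have hF1 : F.eval 1 = 0 := by
    have := F.intervalIntegral_eval_derivative 0 1
    rw [hF, hint, hF0] at this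
    linarith
  obtain ⟨u, rfl⟩ := bubble_pow_succ_dvd (n := 3) hF0 hF1 (hF ▸ dvd_mul_right _ _)
  refine ⟨u, ⟨?_, hF⟩, fun v ⟨_, hv⟩ => ?_⟩
  · rcases eq_or_ne u 0 with rfl | hu0
    · simp
    · have := natDegree_eq_of_derivative_bubble_pow_mul hF hu0
      omega
  · exact mul_left_cancel₀ (pow_ne_zero 4 bubble_ne_zero)
      (eq_of_derivative_eq_of_eval_eq (c := 0) (hv.trans hF.symm) (by simp))
end

section
/- Let f be a nondegenerate triangle in R² with barycentric coordinates λ0, λ1, λ2 and k ≥ 7. If w = (λ0λ1λ2) w1 with w1 ∈ P^{(0)}_{k−3}(f; R²), then rot w := −∂w₂/∂x + ∂w₁/∂y lies in P^{(1)}_{k−1}(f) (polynomials of degree ≤ k−1 vanishing to first order at all vertices of f), and ∫_f rot w = 0. -/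
/-!
At a vertex two of the barycentric coordinates and `w₁ᵢ` vanish, so `λ₀λ₁λ₂ w₁ᵢ` lies in the cube
of the vanishing ideal of that vertex; a derivation maps `I ^ (n + 1)` into `I ^ n`, so `rot w`
lies in its square, i.e. it vanishes there together with its gradient. On the boundary of the
triangle some barycentric coordinate vanishes, hence so does `λ₀λ₁λ₂ w₁ᵢ`. By Fubini, the integral
over a compact convex set of a partial derivative of a polynomial vanishing on the boundary is an
integral over segments on whose endpoints the polynomial vanishes, hence zero.
-/

open MvPolynomial MeasureTheory Set

theorem Derivation.map_mem_pow_of_mem_pow_succ {R A : Type*} [CommSemiring R] [CommSemiring A]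
    [Algebra R A] (D : Derivation R A A) (I : Ideal A) {n : ℕ} {a : A}
    (ha : a ∈ I ^ (n + 1)) : D a ∈ I ^ n := by
  induction n generalizing a with
  | zero => simp
  | succ n ih =>
    rw [pow_succ] at ha
    refine Submodule.mul_induction_on ha (fun x hx y hy => ?_) (fun x y hx hy => ?_)
    · rw [Derivation.leibniz, smul_eq_mul, smul_eq_mul]
      refine add_mem (Ideal.mul_mem_right _ _ hx) ?_
      rw [pow_succ']
      exact Ideal.mul_mem_mul hy (ih hx)
    · rw [map_add]; exact add_mem hx hy

theorem Ideal.mul_mem_pow_three_of_two_mem {A : Type*} [CommSemiring A] (I : Ideal A)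
    {a : Fin 3 → A} {w : A} (j : Fin 3) (ha : ∀ i, i ≠ j → a i ∈ I) (hw : w ∈ I) :
    a 0 * a 1 * a 2 * w ∈ I ^ 3 := by
  rw [pow_succ, pow_two]
  refine Ideal.mul_mem_mul ?_ hw
  fin_cases j
  · exact Ideal.mul_mem_mul (Ideal.mul_mem_left _ _ (ha 1 (by decide))) (ha 2 (by decide))
  · exact Ideal.mul_mem_mul (Ideal.mul_mem_right _ _ (ha 0 (by decide))) (ha 2 (by decide))
  · exact Ideal.mul_mem_right _ _ (Ideal.mul_mem_mul (ha 0 (by decide)) (ha 1 (by decide)))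

namespace MvPolynomial

section CommSemiring

variable {R σ : Type*} [CommSemiring R]

theorem totalDegree_pderiv_le (i : σ) (p : MvPolynomial σ R) :
    (pderiv i p).totalDegree ≤ p.totalDegree - 1 := by
  classical
  refine Finset.sup_le fun m hm => ?_
  have hm' : m + Finsupp.single i 1 ∈ p.support := by
    rw [mem_support_iff, coeff_pderiv] at hm
    exact mem_support_iff.mpr (left_ne_zero_of_mul hm)
  have := le_totalDegree hm'
  rw [Finsupp.sum_add_index' (fun _ => rfl) (fun _ _ _ => rfl),
    Finsupp.sum_single_index rfl] at this
  omega

theorem totalDegree_bubble_mul_le {lam : Fin 3 → MvPolynomial σ R}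
    (hlam : ∀ i, (lam i).totalDegree ≤ 1) {w : MvPolynomial σ R} {d : ℕ}
    (hw : w.totalDegree ≤ d) : (lam 0 * lam 1 * lam 2 * w).totalDegree ≤ d + 3 := by
  have := totalDegree_mul (lam 0 * lam 1 * lam 2) w
  have := totalDegree_mul (lam 0 * lam 1) (lam 2)
  have := totalDegree_mul (lam 0) (lam 1)
  have := hlam 0; have := hlam 1; have := hlam 2
  omega

end CommSemiring

theorem eval_sum_smul_of_totalDegree_le_one {R σ ι : Type*} [CommRing R]
    {p : MvPolynomial σ R} (hp : p.totalDegree ≤ 1) (s : Finset ι) (t : ι → R)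
    (ht : ∑ a ∈ s, t a = 1) (x : ι → σ → R) :
    eval (∑ a ∈ s, t a • x a) p = ∑ a ∈ s, t a * eval (x a) p := by
  conv_lhs => rw [p.as_sum]
  conv_rhs => enter [2, a]; rw [p.as_sum]
  simp only [map_sum, Finset.mul_sum]
  rw [Finset.sum_comm]
  refine Finset.sum_congr rfl fun m hm => ?_
  have hdeg : m.degree ≤ 1 := (le_totalDegree hm).trans hp
  rcases Nat.le_one_iff_eq_zero_or_eq_one.mp hdeg with h0 | h1
  · rw [(Finsupp.degree_eq_zero_iff m).mp h0, monomial_zero']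
    simp only [eval_C, ← Finset.sum_mul, ht, one_mul]
  · obtain ⟨j, rfl⟩ : m ∈ Set.range fun j => Finsupp.single j 1 := by
      rw [Finsupp.range_single_one]; exact h1
    simp only [eval_monomial, Finsupp.prod_single_index, pow_one, pow_zero, Finset.sum_apply,
      Pi.smul_apply, smul_eq_mul, Finset.mul_sum]
    exact Finset.sum_congr rfl fun a _ => by ring

end MvPolynomial

theorem AffineBasis.coord_eq_eval {R σ ι : Type*} [CommRing R] [Fintype ι] [DecidableEq ι]
    (B : AffineBasis ι R (σ → R)) {i : ι} {p : MvPolynomial σ R} (hp : p.totalDegree ≤ 1)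
    (hpB : ∀ j, eval (B j) p = if i = j then 1 else 0) (x : σ → R) :
    B.coord i x = eval x p := by
  conv_rhs => rw [← B.linear_combination_coord_eq_self x]
  rw [eval_sum_smul_of_totalDegree_le_one hp _ _ (B.sum_coord_apply_eq_one x)]
  simp [hpB]

theorem AffineBasis.exists_coord_eq_zero {ι E : Type*} [Finite ι] [NormedAddCommGroup E]
    [NormedSpace ℝ E] (B : AffineBasis ι ℝ E) {x : E}
    (hx : x ∈ convexHull ℝ (range B) \ interior (convexHull ℝ (range B))) :
    ∃ i, B.coord i x = 0 := by
  rw [B.interior_convexHull, B.convexHull_eq_nonneg_coord] at hx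
  obtain ⟨hnonneg, hpos⟩ := hx
  obtain ⟨i, hi⟩ := not_forall.mp hpos
  exact ⟨i, le_antisymm (not_lt.mp hi) (hnonneg i)⟩

theorem exists_eval_eq_zero_of_mem_convexHull_diff_interior {ι σ : Type*} [Fintype ι]
    [DecidableEq ι] [Fintype σ] {v : ι → σ → ℝ} (hv : AffineIndependent ℝ v)
    (hcard : Fintype.card ι = Fintype.card σ + 1) {lam : ι → MvPolynomial σ ℝ}
    (hdeg : ∀ i, (lam i).totalDegree ≤ 1)
    (heval : ∀ i j, eval (v j) (lam i) = if i = j then 1 else 0)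
    {x : σ → ℝ} (hx : x ∈ convexHull ℝ (range v) \ interior (convexHull ℝ (range v))) :
    ∃ i, eval x (lam i) = 0 := by
  let B : AffineBasis ι ℝ (σ → ℝ) :=
    ⟨v, hv, by rw [hv.affineSpan_eq_top_iff_card_eq_finrank_add_one]; simpa using hcard⟩
  obtain ⟨i, hi⟩ := B.exists_coord_eq_zero hx
  exact ⟨i, B.coord_eq_eval (hdeg i) (heval i) x ▸ hi⟩

namespace MvPolynomial

theorem hasDerivAt_eval_update {σ : Type*} [DecidableEq σ]
    (p : MvPolynomial σ ℝ) (c : σ → ℝ) (i : σ) (t : ℝ) :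
    HasDerivAt (fun s => eval (Function.update c i s) p)
      (eval (Function.update c i t) (pderiv i p)) t := by
  induction p using MvPolynomial.induction_on with
  | C a => simpa using hasDerivAt_const t a
  | add p q hp hq => simp only [map_add]; exact hp.add hq
  | mul_X p j hp =>
    have hj : HasDerivAt (fun s => Function.update c i s j) (if j = i then 1 else 0) t := by
      by_cases h : j = i
      · subst h; simp only [Function.update_self, if_true]; exact hasDerivAt_id' t
      · simp only [h, if_false, Function.update_of_ne h]; exact hasDerivAt_const t (c j)
    simp only [map_mul, eval_X, pderiv_mul, map_add, pderiv_X]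
    exact (hp.mul hj).congr_deriv (by by_cases h : j = i <;> simp [h])

end MvPolynomial

theorem setIntegral_eq_zero_of_hasDerivAt_of_convex {s : Set ℝ} (hs : IsCompact s)
    (hsc : Convex ℝ s) {f f' : ℝ → ℝ} (hf : ∀ t, HasDerivAt f (f' t) t) (hf' : Continuous f')
    (hfs : ∀ t ∈ s \ interior s, f t = 0) : ∫ t in s, f' t = 0 := by
  rcases s.eq_empty_or_nonempty with rfl | hne
  · simp
  obtain ⟨a, b, hab, rfl⟩ : ∃ a b, a ≤ b ∧ s = Icc a b :=
    ⟨_, _, csInf_le_csSup hne hs.bddBelow hs.bddAbove,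
      eq_Icc_of_connected_compact ⟨hne, hsc.isPreconnected⟩ hs⟩
  have hfa : f a = 0 := hfs a (by simp [hab])
  have hfb : f b = 0 := hfs b (by simp [hab])
  rw [integral_Icc_eq_integral_Ioc, ← intervalIntegral.integral_of_le hab,
    intervalIntegral.integral_eq_sub_of_hasDerivAt (fun t _ => hf t) (hf'.intervalIntegrable a b),
    hfa, hfb, sub_zero]

theorem Convex.preimage_finInsertNth {n : ℕ} {T : Set (Fin (n + 1) → ℝ)} (hT : Convex ℝ T)
    (i : Fin (n + 1)) (y : Fin n → ℝ) :
    Convex ℝ ((i.insertNth (α := fun _ => ℝ) · y) ⁻¹' T) := by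
  intro t₁ h₁ t₂ h₂ a b ha hb hab
  have hcomb :
      i.insertNth (a • t₁ + b • t₂) y = a • i.insertNth t₁ y + b • i.insertNth t₂ y := by
    ext j
    refine i.succAboveCases ?_ (fun j => ?_) j <;> simp [← add_mul, hab]
  exact (mem_preimage.2 (hcomb ▸ hT h₁ h₂ ha hb hab) : _)

theorem continuous_finInsertNth_left {n : ℕ} (i : Fin (n + 1)) (y : Fin n → ℝ) :
    Continuous fun t : ℝ => i.insertNth (α := fun _ => ℝ) t y := by
  fun_prop

namespace MvPolynomial

variable {n : ℕ} {T : Set (Fin (n + 1) → ℝ)} {p : MvPolynomial (Fin (n + 1)) ℝ}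

theorem integral_slice_eval_pderiv_eq_zero (hT : IsCompact T) (hTc : Convex ℝ T)
    (hp : ∀ x ∈ T \ interior T, eval x p = 0) (i : Fin (n + 1)) (y : Fin n → ℝ) :
    ∫ t in (i.insertNth (α := fun _ => ℝ) · y) ⁻¹' T,
      eval (i.insertNth t y) (pderiv i p) = 0 := by
  have hline := continuous_finInsertNth_left i y
  refine setIntegral_eq_zero_of_hasDerivAt_of_convex ?_ (hTc.preimage_finInsertNth i y)
    (fun t => ?_) ((continuous_eval _).comp hline)
    fun t ht => hp _ ⟨ht.1, fun hint => ht.2 ?_⟩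
  · exact (hT.image (continuous_apply i)).of_isClosed_subset (hT.isClosed.preimage hline)
      fun t ht => ⟨_, ht, by simp⟩
  · simpa [Fin.update_insertNth] using hasDerivAt_eval_update p (i.insertNth 0 y) i t
  · exact preimage_interior_subset_interior_preimage hline hint

theorem setIntegral_eval_pderiv_eq_zero (hT : IsCompact T) (hTc : Convex ℝ T)
    (hp : ∀ x ∈ T \ interior T, eval x p = 0) (i : Fin (n + 1)) :
    ∫ x in T, eval x (pderiv i p) = 0 := by
  set g : (Fin (n + 1) → ℝ) → ℝ := fun x => eval x (pderiv i p)
  set e := (MeasurableEquiv.piFinSuccAbove (fun _ => ℝ) i).symm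
  have he : MeasurePreserving e := (volume_preserving_piFinSuccAbove (fun _ => ℝ) i).symm _
  have hTe : MeasurableSet (e ⁻¹' T) := hT.isClosed.measurableSet.preimage e.measurable
  have hint : Integrable ((e ⁻¹' T).indicator (g ∘ e)) (volume.prod volume) := by
    rw [← Measure.volume_eq_prod]
    exact ((he.integrableOn_comp_preimage e.measurableEmbedding).mpr
      ((continuous_eval _).continuousOn.integrableOn_compact hT)).integrable_indicator hTe
  have hslice : ∀ y, ∫ t, (e ⁻¹' T).indicator (g ∘ e) (t, y) = 0 := fun y => by
    rw [← integral_slice_eval_pderiv_eq_zero hT hTc hp i y,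
      ← integral_indicator (hT.isClosed.preimage (continuous_finInsertNth_left i y)).measurableSet]
    rfl
  rw [← he.map_eq, setIntegral_map_equiv, ← integral_indicator hTe, Measure.volume_eq_prod]
  refine (integral_prod_symm _ hint).trans ?_
  simp only [hslice, integral_zero]

end MvPolynomial

/-- If `w = (λ0λ1λ2) w1` with `w1 ∈ P⁰_{k-3}(f; ℝ²)`, then
`rot w = -∂w₂/∂x + ∂w₁/∂y` lies in `P¹_{k-1}(f)` (degree `≤ k-1`, value and
gradient vanishing at the three vertices of `f`) and has zero mean over `f`. -/
theorem stmt_5 (k : ℕ) (hk : 7 ≤ k)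
    (v : Fin 3 → Fin 2 → ℝ) (hv : AffineIndependent ℝ v)
    (lam : Fin 3 → MvPolynomial (Fin 2) ℝ)
    (hdeg : ∀ i, (lam i).totalDegree ≤ 1)
    (heval : ∀ i j, eval (v j) (lam i) = if i = j then 1 else 0)
    (w1 : Fin 2 → MvPolynomial (Fin 2) ℝ)
    (hw1 : ∀ i, (w1 i).totalDegree ≤ k - 3)
    (hw1v : ∀ i j, eval (v j) (w1 i) = 0) :
    (pderiv 1 (lam 0 * lam 1 * lam 2 * w1 0) -
      pderiv 0 (lam 0 * lam 1 * lam 2 * w1 1)).totalDegree ≤ k - 1 ∧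
    (∀ j, eval (v j)
      (pderiv 1 (lam 0 * lam 1 * lam 2 * w1 0) -
        pderiv 0 (lam 0 * lam 1 * lam 2 * w1 1)) = 0) ∧
    (∀ j i, eval (v j) (pderiv i
      (pderiv 1 (lam 0 * lam 1 * lam 2 * w1 0) -
        pderiv 0 (lam 0 * lam 1 * lam 2 * w1 1))) = 0) ∧
    (∫ x in convexHull ℝ (Set.range v),
      eval x (pderiv 1 (lam 0 * lam 1 * lam 2 * w1 0) -
        pderiv 0 (lam 0 * lam 1 * lam 2 * w1 1)) = 0) := by
  have hbubble : ∀ m, ∀ x ∈ convexHull ℝ (range v) \ interior (convexHull ℝ (range v)),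
      eval x (lam 0 * lam 1 * lam 2 * w1 m) = 0 := fun m x hx => by
    obtain ⟨i, hi⟩ := exists_eval_eq_zero_of_mem_convexHull_diff_interior hv rfl hdeg heval hx
    fin_cases i <;> simp_all
  have hrot : ∀ j, pderiv 1 (lam 0 * lam 1 * lam 2 * w1 0) -
      pderiv 0 (lam 0 * lam 1 * lam 2 * w1 1) ∈ RingHom.ker (eval (v j)) ^ 2 := fun j => by
    have hvanish : ∀ m, lam 0 * lam 1 * lam 2 * w1 m ∈ RingHom.ker (eval (v j)) ^ 3 := fun m =>
      Ideal.mul_mem_pow_three_of_two_mem _ j (fun i hij => by simp [RingHom.mem_ker, heval, hij])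
        (hw1v m j)
    exact sub_mem ((pderiv 1).map_mem_pow_of_mem_pow_succ _ (hvanish 0))
      ((pderiv 0).map_mem_pow_of_mem_pow_succ _ (hvanish 1))
  have hT : IsCompact (convexHull ℝ (range v)) := (finite_range v).isCompact_convexHull (𝕜 := ℝ)
  refine ⟨?_, fun j => Ideal.pow_le_self two_ne_zero (hrot j),
    fun j i => by simpa using (pderiv i).map_mem_pow_of_mem_pow_succ _ (hrot j), ?_⟩
  · refine (totalDegree_sub _ _).trans (max_le ?_ ?_) <;>
    · refine (totalDegree_pderiv_le _ _).trans ?_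
      have := totalDegree_bubble_mul_le hdeg (hw1 0)
      have := totalDegree_bubble_mul_le hdeg (hw1 1)
      omega
  · rw [setIntegral_congr_fun hT.isClosed.measurableSet fun x _ => map_sub (eval x) _ _,
      integral_sub ((continuous_eval _).continuousOn.integrableOn_compact hT)
        ((continuous_eval _).continuousOn.integrableOn_compact hT),
      setIntegral_eval_pderiv_eq_zero hT (convex_convexHull ℝ _) (hbubble 0),
      setIntegral_eval_pderiv_eq_zero hT (convex_convexHull ℝ _) (hbubble 1), sub_zero]
end

section
/- Let f be a nondegenerate triangle in R² and k ≥ 7. If u = (λ0λ1λ2)³ u1 with u1 ∈ P_{k−7}(f), then the Hessian ∇²u lies in (λ0λ1λ2) P^{(0)}_{k−3}(f; S_{2×2}), where S_{2×2} denotes symmetric 2×2 matrices. -/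
open MvPolynomial

/-!
By the Leibniz rule, `∂ᵢ∂ⱼ (b³ u) = b σᵢⱼ` with
`σᵢⱼ = 6 u ∂ᵢb ∂ⱼb + 3 b (u ∂ᵢ∂ⱼb + ∂ᵢu ∂ⱼb + ∂ⱼu ∂ᵢb) + b² ∂ᵢ∂ⱼu`, which is symmetric since
partial derivatives commute. Every term of `σᵢⱼ` contains a factor `b` or `∇b`, and for the bubble
`b = λ₀λ₁λ₂` both vanish at each vertex, where two of the three factors vanish. Each partial
derivative lowers the total degree by one, so `deg σᵢⱼ ≤ 2 deg b + deg u - 2 ≤ k - 3`.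
-/

namespace MvPolynomial

variable {R σ : Type*} [CommSemiring R]

theorem pderiv_pderiv_comm (i j : σ) (p : MvPolynomial σ R) :
    pderiv i (pderiv j p) = pderiv j (pderiv i p) := by
  classical
  induction p using MvPolynomial.induction_on with
  | C a => simp only [pderiv_C, map_zero]
  | add p q hp hq => simp only [map_add, hp, hq]
  | mul_X p n ih =>
    have hX : ∀ a b : σ, pderiv a (pderiv b (X n : MvPolynomial σ R)) = 0 := fun a b => by
      rw [pderiv_X, Pi.single_apply]
      split_ifs <;> simp
    simp only [pderiv_mul, map_add, ih, hX, mul_zero, add_zero]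
    ring

theorem totalDegree_pderiv_lt {i : σ} {p : MvPolynomial σ R} (h : pderiv i p ≠ 0) :
    (pderiv i p).totalDegree < p.totalDegree := by
  obtain ⟨m, hm, hmax⟩ := (pderiv i p).support.exists_mem_eq_sup (support_nonempty.mpr h)
    fun s => s.sum fun _ e => e
  have hshift : m + Finsupp.single i 1 ∈ p.support := by
    rw [mem_support_iff, coeff_pderiv] at hm
    exact mem_support_iff.mpr (left_ne_zero_of_mul hm)
  calc (pderiv i p).totalDegree = m.sum fun _ e => e := hmax
    _ < (m + Finsupp.single i 1).sum fun _ e => e := by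
      rw [Finsupp.sum_add_index' (fun _ => rfl) (fun _ _ _ => rfl), Finsupp.sum_single_index rfl]
      omega
    _ ≤ p.totalDegree := le_totalDegree hshift

theorem totalDegree_mul_pderiv_le (q : MvPolynomial σ R) (i : σ) (p : MvPolynomial σ R) :
    (q * pderiv i p).totalDegree ≤ q.totalDegree + p.totalDegree - 1 := by
  by_cases h : pderiv i p = 0
  · simp [h]
  · have hlt := totalDegree_pderiv_lt h
    have hmul := totalDegree_mul q (pderiv i p)
    omega

theorem totalDegree_mul_pderiv_pderiv_le (q : MvPolynomial σ R) (i j : σ) (p : MvPolynomial σ R) :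
    (q * pderiv i (pderiv j p)).totalDegree ≤ q.totalDegree + p.totalDegree - 2 := by
  by_cases h : pderiv i (pderiv j p) = 0
  · simp [h]
  · have hlt₁ := totalDegree_pderiv_lt h
    have hlt₂ := totalDegree_pderiv_lt (i := j) (p := p) fun h' => h (by rw [h', map_zero])
    have hmul := totalDegree_mul q (pderiv i (pderiv j p))
    omega

-- The factors are grouped so that the degree bounds survive truncated subtraction when `b` or `u`
-- is constant.
noncomputable def cubeMulHessianCofactor (b u : MvPolynomial σ R) (i j : σ) : MvPolynomial σ R :=
  6 • (u * pderiv i b * pderiv j b) +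
    3 • (b * u * pderiv i (pderiv j b) + b * pderiv i u * pderiv j b +
      b * pderiv j u * pderiv i b) +
    b ^ 2 * pderiv i (pderiv j u)

theorem pderiv_pderiv_pow_three_mul (b u : MvPolynomial σ R) (i j : σ) :
    pderiv i (pderiv j (b ^ 3 * u)) = b * cubeMulHessianCofactor b u i j := by
  simp only [cubeMulHessianCofactor, pderiv_mul, pderiv_pow, map_add, Derivation.map_natCast]
  ring

theorem cubeMulHessianCofactor_comm (b u : MvPolynomial σ R) (i j : σ) :
    cubeMulHessianCofactor b u i j = cubeMulHessianCofactor b u j i := by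
  simp only [cubeMulHessianCofactor, pderiv_pderiv_comm i j]
  ring

theorem eval_cubeMulHessianCofactor_eq_zero {b : MvPolynomial σ R} {x : σ → R}
    (hb : eval x b = 0) (hdb : ∀ i, eval x (pderiv i b) = 0) (u : MvPolynomial σ R) (i j : σ) :
    eval x (cubeMulHessianCofactor b u i j) = 0 := by
  simp [cubeMulHessianCofactor, hb, hdb]

theorem totalDegree_cubeMulHessianCofactor_le {b u : MvPolynomial σ R} {d n : ℕ}
    (hb : b.totalDegree ≤ d) (hu : u.totalDegree ≤ n) (i j : σ) :
    (cubeMulHessianCofactor b u i j).totalDegree ≤ 2 * d + n - 2 := by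
  have hu_db_db : (u * pderiv i b * pderiv j b).totalDegree ≤ 2 * d + n - 2 := by
    have e₁ := totalDegree_mul_pderiv_le u i b
    have e₂ := totalDegree_mul_pderiv_le (u * pderiv i b) j b
    omega
  have hbu_ddb : (b * u * pderiv i (pderiv j b)).totalDegree ≤ 2 * d + n - 2 := by
    have e₁ := totalDegree_mul b u
    have e₂ := totalDegree_mul_pderiv_pderiv_le (b * u) i j b
    omega
  have hb_du_db : ∀ k l, (b * pderiv k u * pderiv l b).totalDegree ≤ 2 * d + n - 2 := fun k l => by
    have e₁ := totalDegree_mul_pderiv_le b k u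
    have e₂ := totalDegree_mul_pderiv_le (b * pderiv k u) l b
    omega
  have hb2_ddu : (b ^ 2 * pderiv i (pderiv j u)).totalDegree ≤ 2 * d + n - 2 := by
    have e₁ := totalDegree_pow b 2
    have e₂ := totalDegree_mul_pderiv_pderiv_le (b ^ 2) i j u
    omega
  have hadd : ∀ p q : MvPolynomial σ R, p.totalDegree ≤ 2 * d + n - 2 →
      q.totalDegree ≤ 2 * d + n - 2 → (p + q).totalDegree ≤ 2 * d + n - 2 :=
    fun p q hp hq => (totalDegree_add p q).trans (max_le hp hq)
  exact hadd _ _ (hadd _ _ ((totalDegree_smul_le _ _).trans hu_db_db)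
    ((totalDegree_smul_le _ _).trans (hadd _ _ (hadd _ _ hbu_ddb (hb_du_db i j)) (hb_du_db j i))))
    hb2_ddu

end MvPolynomial

theorem stmt_8_general (k : ℕ) (hk : 7 ≤ k)
    (v : Fin 3 → Fin 2 → ℝ)
    (lam : Fin 3 → MvPolynomial (Fin 2) ℝ)
    (hdeg : ∀ i, (lam i).totalDegree ≤ 1)
    (heval : ∀ i j, eval (v j) (lam i) = if i = j then 1 else 0)
    (u1 : MvPolynomial (Fin 2) ℝ) (hu1 : u1.totalDegree ≤ k - 7) :
    ∃ σ1 : Fin 2 → Fin 2 → MvPolynomial (Fin 2) ℝ,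
      (∀ i j, (σ1 i j).totalDegree ≤ k - 3) ∧
      (∀ i j, σ1 i j = σ1 j i) ∧
      (∀ i j l, eval (v l) (σ1 i j) = 0) ∧
      (∀ i j, pderiv i (pderiv j ((lam 0 * lam 1 * lam 2) ^ 3 * u1)) =
        lam 0 * lam 1 * lam 2 * σ1 i j) := by
  set b := lam 0 * lam 1 * lam 2 with hb
  have hb_deg : b.totalDegree ≤ 3 := (totalDegree_mul _ _).trans <|
    add_le_add ((totalDegree_mul _ _).trans (add_le_add (hdeg 0) (hdeg 1))) (hdeg 2)
  have hb_vertex : ∀ l, eval (v l) b = 0 ∧ ∀ i, eval (v l) (pderiv i b) = 0 := by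
    intro l
    fin_cases l <;> simp [hb, heval]
  refine ⟨cubeMulHessianCofactor b u1, fun i j => ?_, cubeMulHessianCofactor_comm b u1,
    fun i j l => eval_cubeMulHessianCofactor_eq_zero (hb_vertex l).1 (hb_vertex l).2 u1 i j,
    pderiv_pderiv_pow_three_mul b u1⟩
  exact (totalDegree_cubeMulHessianCofactor_le hb_deg hu1 i j).trans (by omega)

/-- If `u = (λ0λ1λ2)³ u1` with `u1 ∈ P_{k-7}(f)`, then the Hessian `∇²u` lies in
`(λ0λ1λ2) P⁰_{k-3}(f; S₂ₓ₂)`: symmetric-matrix polynomials of degree `≤ k-3`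
vanishing at the vertices, multiplied by the cubic bubble. -/
theorem stmt_8 (k : ℕ) (hk : 7 ≤ k)
    (v : Fin 3 → Fin 2 → ℝ) (hv : AffineIndependent ℝ v)
    (lam : Fin 3 → MvPolynomial (Fin 2) ℝ)
    (hdeg : ∀ i, (lam i).totalDegree ≤ 1)
    (heval : ∀ i j, eval (v j) (lam i) = if i = j then 1 else 0)
    (u1 : MvPolynomial (Fin 2) ℝ) (hu1 : u1.totalDegree ≤ k - 7) :
    ∃ σ1 : Fin 2 → Fin 2 → MvPolynomial (Fin 2) ℝ,
      (∀ i j, (σ1 i j).totalDegree ≤ k - 3) ∧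
      (∀ i j, σ1 i j = σ1 j i) ∧
      (∀ i j l, eval (v l) (σ1 i j) = 0) ∧
      (∀ i j, pderiv i (pderiv j ((lam 0 * lam 1 * lam 2) ^ 3 * u1)) =
        lam 0 * lam 1 * lam 2 * σ1 i j) :=
  stmt_8_general k hk v lam hdeg heval u1 hu1
end

section
/- Let f be a triangle in R² and k ≥ 3. The total number of the degrees of freedom for the rotated Hu–Zhang element — (i) vertex values σ(x) for the 3 vertices (3 dofs each), (ii) edge moments (σt, w)_e for w ∈ [(λ0λ1)P_{k−2}(e)]² on each of the 3 edges (2(k−1) dofs each), and (iii) interior dofs on B^{rot;S}_{f,k} (3·(k−1)k/2 dofs) — equals dim P_k(f; S) = 3(k+1)(k+2)/2. Moreover, any σ ∈ P_k(f;S) vanishing at all these degrees of freedom is zero, provided the interior bilinear form (P_{hess B} σ, P_{hess B} η) + (rot σ, rot η) is an inner product on B^{rot;S}_{f,k}. -/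
/-!
On an edge `[x, y]`, each row of the tangential trace `σ t`, as a polynomial in the edge
parameter `s`, has degree `≤ k` and vanishes at `s = 0, 1` by the vertex conditions, so it equals
`s (s - 1) q(s)` with `deg q ≤ k - 2`. Testing the edge moments with `-q` gives
`∫₀¹ |σ t|² = 0`, hence `σ t = 0` on `∂f` and `σ ∈ B^{rot;S}_{f,k}`. Since the `L²(f)` product is
definite on the finite-dimensional space `hess B`, the projection `P_{hess B} σ` exists, and the
interior moments tested with `η = σ` give `‖P_{hess B} σ‖² + ‖rot σ‖² = 0`, so `σ = 0`.
-/

open MvPolynomial MeasureTheory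

/-- The L²(f) inner product of two matrix-valued polynomial fields over the
triangle `T`. -/
noncomputable def matL2 (T : Set (Fin 2 → ℝ))
    (ρ τ : Fin 2 → Fin 2 → MvPolynomial (Fin 2) ℝ) : ℝ :=
  ∫ x in T, ∑ a, ∑ b, eval x (ρ a b) * eval x (τ a b)

/-- The L²(f) inner product of the rowwise rotations of two matrix fields. -/
noncomputable def rotL2 (T : Set (Fin 2 → ℝ))
    (ρ τ : Fin 2 → Fin 2 → MvPolynomial (Fin 2) ℝ) : ℝ :=
  ∫ x in T, ∑ a, eval x (pderiv 1 (ρ a 0) - pderiv 0 (ρ a 1)) *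
    eval x (pderiv 1 (τ a 0) - pderiv 0 (τ a 1))

/-- `hess B¹_{f,k-4}`: the Hessians of `(λ0λ1λ2)² P_{k-4}(f)`. -/
def hessBubble (k : ℕ) (lam : Fin 3 → MvPolynomial (Fin 2) ℝ) :
    Set (Fin 2 → Fin 2 → MvPolynomial (Fin 2) ℝ) :=
  {ρ | ∃ w : MvPolynomial (Fin 2) ℝ, w.totalDegree ≤ k - 4 ∧
    ∀ a b, ρ a b = pderiv a (pderiv b ((lam 0 * lam 1 * lam 2) ^ 2 * w))}

/-- `τ` is the L²(f)-orthogonal projection of `σ` onto `hess B¹_{f,k-4}`. -/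
def IsHessProj (k : ℕ) (lam : Fin 3 → MvPolynomial (Fin 2) ℝ)
    (T : Set (Fin 2 → ℝ)) (σ τ : Fin 2 → Fin 2 → MvPolynomial (Fin 2) ℝ) : Prop :=
  τ ∈ hessBubble k lam ∧ ∀ ρ ∈ hessBubble k lam, matL2 T σ ρ = matL2 T τ ρ

/-- `B^{rot;S}_{f,k}`: symmetric matrix fields of degree `≤ k` with vanishing
tangential trace on each edge of `f`. -/
def rotSBubble (k : ℕ) (v : Fin 3 → Fin 2 → ℝ) :
    Set (Fin 2 → Fin 2 → MvPolynomial (Fin 2) ℝ) :=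
  {σ | (∀ a b, (σ a b).totalDegree ≤ k) ∧ (∀ a b, σ a b = σ b a) ∧
    ∀ m : Fin 3, ∀ x ∈ segment ℝ (v (m + 1)) (v (m + 2)), ∀ a,
      ∑ b, eval x (σ a b) * (v (m + 1) b - v (m + 2) b) = 0}


namespace Polynomial

theorem exists_eq_X_mul_X_sub_one_mul {R : Type*} [CommRing R] {p : R[X]} {k : ℕ}
    (hp : p.natDegree ≤ k) (h0 : p.eval 0 = 0) (h1 : p.eval 1 = 0) :
    ∃ q : R[X], p = X * (X - 1) * q ∧ q.natDegree ≤ k - 2 := by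
  nontriviality R
  obtain ⟨p₁, rfl⟩ : X ∣ p := X_dvd_iff.2 (by rwa [coeff_zero_eq_eval_zero])
  obtain ⟨q, rfl⟩ : X - C 1 ∣ p₁ := dvd_iff_isRoot.2 (by simpa using h1)
  refine ⟨q, by rw [map_one, mul_assoc], ?_⟩
  rcases eq_or_ne q 0 with rfl | hq
  · simp
  rw [← mul_assoc, (monic_X.mul (monic_X_sub_C 1)).natDegree_mul' hq,
    (monic_X.natDegree_mul' (X_sub_C_ne_zero 1)), natDegree_X, natDegree_X_sub_C] at hp
  omega

theorem eq_zero_of_integral_sum_sq_eq_zero {ι : Type*} [Fintype ι] (p : ι → ℝ[X])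
    (h : ∫ s in (0 : ℝ)..1, ∑ a, (p a).eval s ^ 2 = 0) : p = 0 := by
  have hcont : Continuous fun s => ∑ a, (p a).eval s ^ 2 := by fun_prop
  have hae : (fun s => ∑ a, (p a).eval s ^ 2) =ᵐ[volume.restrict (Set.Ioc 0 1)] 0 :=
    (intervalIntegral.integral_eq_zero_iff_of_le_of_nonneg_ae zero_le_one
      (.of_forall fun s => by positivity) (hcont.intervalIntegrable 0 1)).1 h
  have hzero : Set.EqOn (fun s => ∑ a, (p a).eval s ^ 2) 0 (Set.Ioo 0 1) :=
    Measure.eqOn_open_of_ae_eq (ae_restrict_of_ae_restrict_of_subset Set.Ioo_subset_Ioc_self hae)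
      isOpen_Ioo hcont.continuousOn continuousOn_const
  funext a
  refine eq_zero_of_infinite_isRoot _ ((Set.Ioo_infinite zero_lt_one).mono fun s hs => ?_)
  exact pow_eq_zero_iff two_ne_zero |>.1 <|
    (Finset.sum_eq_zero_iff_of_nonneg fun b _ => sq_nonneg ((p b).eval s)).1
      (hzero hs) a (Finset.mem_univ a)


theorem eq_zero_of_forall_integral_mul_bubble_eq_zero {ι : Type*} [Fintype ι] {k : ℕ}
    {p : ι → ℝ[X]} (hdeg : ∀ a, (p a).natDegree ≤ k) (h0 : ∀ a, (p a).eval 0 = 0)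
    (h1 : ∀ a, (p a).eval 1 = 0)
    (h : ∀ q : ι → ℝ[X], (∀ a, (q a).natDegree ≤ k - 2) →
      ∫ s in (0 : ℝ)..1, ∑ a, (p a).eval s * (s * (1 - s) * (q a).eval s) = 0) :
    p = 0 := by
  choose q hpq hq using fun a => exists_eq_X_mul_X_sub_one_mul (hdeg a) (h0 a) (h1 a)
  refine eq_zero_of_integral_sum_sq_eq_zero p <| .trans ?_ (h (-q) (by simpa using hq))
  congr! 3 with s a
  rw [hpq a]
  simp only [eval_mul, eval_sub, eval_X, eval_one, Pi.neg_apply, eval_neg]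
  ring

end Polynomial

namespace MvPolynomial

open Polynomial

variable {n : Type*}

theorem natDegree_aeval_le_totalDegree {R : Type*} [CommSemiring R] {g : n → R[X]}
    (hg : ∀ i, (g i).natDegree ≤ 1) (φ : MvPolynomial n R) :
    (aeval g φ).natDegree ≤ φ.totalDegree := by
  conv_lhs => rw [φ.as_sum, map_sum]
  refine natDegree_sum_le_of_forall_le _ _ fun u hu => ?_
  rw [aeval_monomial, Polynomial.algebraMap_eq]
  refine natDegree_C_mul_le _ _ |>.trans <|
    (natDegree_prod_le _ _).trans <| le_trans ?_ (le_totalDegree hu)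
  exact Finset.sum_le_sum fun i _ => natDegree_pow_le.trans (by nlinarith [hg i])

noncomputable def lineRestrict (x y : n → ℝ) : MvPolynomial n ℝ →ₐ[ℝ] ℝ[X] :=
  aeval fun c => Polynomial.C (y c - x c) * Polynomial.X + Polynomial.C (x c)

theorem eval_lineRestrict (x y : n → ℝ) (φ : MvPolynomial n ℝ) (s : ℝ) :
    (lineRestrict x y φ).eval s = MvPolynomial.eval (fun c => x c + s * (y c - x c)) φ := by
  induction φ using MvPolynomial.induction_on with
  | C a => simp [lineRestrict]
  | add p q hp hq => simp [hp, hq]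
  | mul_X p i hp =>
    rw [map_mul, Polynomial.eval_mul, hp]
    simp only [lineRestrict, aeval_X, map_mul, eval_X, Polynomial.eval_mul,
      Polynomial.eval_add, Polynomial.eval_C, Polynomial.eval_X]
    ring

theorem natDegree_lineRestrict_le (x y : n → ℝ) (φ : MvPolynomial n ℝ) :
    (lineRestrict x y φ).natDegree ≤ φ.totalDegree :=
  natDegree_aeval_le_totalDegree (fun _ => natDegree_linear_le) φ

theorem tangential_trace_eq_zero_of_edge_moments {ι : Type*} [Fintype ι] [Fintype n] {k : ℕ}
    {x y : n → ℝ} {σ : ι → n → MvPolynomial n ℝ} (hdeg : ∀ a b, (σ a b).totalDegree ≤ k)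
    (hx : ∀ a b, MvPolynomial.eval x (σ a b) = 0) (hy : ∀ a b, MvPolynomial.eval y (σ a b) = 0)
    (hmom : ∀ q : ι → ℝ[X], (∀ a, (q a).natDegree ≤ k - 2) →
      (∫ s in (0:ℝ)..1, ∑ a,
        (∑ b, MvPolynomial.eval (fun c => x c + s * (y c - x c)) (σ a b) * (y b - x b)) *
          (s * (1 - s) * (q a).eval s)) = 0) :
    ∀ z ∈ segment ℝ x y, ∀ a, ∑ b, MvPolynomial.eval z (σ a b) * (x b - y b) = 0 := by
  set P : ι → ℝ[X] := fun a => ∑ b, lineRestrict x y (σ a b) * Polynomial.C (y b - x b)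
  have hP : ∀ a s, (P a).eval s =
      ∑ b, MvPolynomial.eval (fun c => x c + s * (y c - x c)) (σ a b) * (y b - x b) := by
    simp [P, eval_finsetSum, eval_lineRestrict]
  have hP0 : P = 0 := by
    refine eq_zero_of_forall_integral_mul_bubble_eq_zero (k := k) (fun a => ?_)
      (fun a => by simp [hP, hx]) (fun a => by simp [hP, hy]) (by simpa only [hP] using hmom)
    exact natDegree_sum_le_of_forall_le _ _ fun b _ =>
      (natDegree_mul_C_le _ _).trans ((natDegree_lineRestrict_le x y _).trans (hdeg a b))
  rintro z hz a
  obtain ⟨t, -, rfl⟩ := (segment_eq_image' ℝ x y) ▸ hz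
  have hzt : x + t • (y - x) = fun c => x c + t * (y c - x c) := rfl
  have hPt := hP a t
  rw [hP0, Pi.zero_apply, Polynomial.eval_zero] at hPt
  simp only [hzt, ← neg_sub (y _), mul_neg, Finset.sum_neg_distrib, ← hPt, neg_zero]

end MvPolynomial

theorem AffineIndependent.interior_convexHull_nonempty {V ι : Type*} [NormedAddCommGroup V]
    [NormedSpace ℝ V] [FiniteDimensional ℝ V] [Fintype ι] {v : ι → V}
    (hv : AffineIndependent ℝ v) (hcard : Fintype.card ι = Module.finrank ℝ V + 1) :
    (interior (convexHull ℝ (Set.range v))).Nonempty :=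
  interior_convexHull_nonempty_iff_affineSpan_eq_top.2 <|
    hv.affineSpan_eq_top_iff_card_eq_finrank_add_one.2 hcard

theorem MvPolynomial.eq_zero_of_isOpen_of_forall_eval_eq_zero {n : Type*} [Fintype n]
    {p : MvPolynomial n ℝ} {U : Set (n → ℝ)} (hU : IsOpen U) (hne : U.Nonempty)
    (h : ∀ x ∈ U, eval x p = 0) : p = 0 := by
  obtain ⟨x₀, hx₀⟩ := hne
  have := (AnalyticOnNhd.eval_mvPolynomial p).eqOn_zero_of_preconnected_of_eventuallyEq_zero
    isPreconnected_univ (Set.mem_univ x₀) (Filter.eventually_of_mem (hU.mem_nhds hx₀) h)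
  exact MvPolynomial.funext fun x => by simpa using this (Set.mem_univ x)

section MatL2

variable {T : Set (Fin 2 → ℝ)}

theorem continuous_matL2_integrand (ρ τ : Fin 2 → Fin 2 → MvPolynomial (Fin 2) ℝ) :
    Continuous fun x : Fin 2 → ℝ => ∑ a, ∑ b, eval x (ρ a b) * eval x (τ a b) :=
  continuous_finsetSum _ fun _ _ => continuous_finsetSum _ fun _ _ =>
    (continuous_eval _).mul (continuous_eval _)

theorem matL2_comm (ρ τ : Fin 2 → Fin 2 → MvPolynomial (Fin 2) ℝ) :
    matL2 T ρ τ = matL2 T τ ρ := by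
  simp only [matL2, mul_comm (eval _ (ρ _ _))]

theorem matL2_add_left (hT : IsCompact T) (ρ ρ' τ : Fin 2 → Fin 2 → MvPolynomial (Fin 2) ℝ) :
    matL2 T (ρ + ρ') τ = matL2 T ρ τ + matL2 T ρ' τ := by
  rw [matL2, matL2, matL2, ← integral_add
    ((continuous_matL2_integrand ρ τ).continuousOn.integrableOn_compact hT)
    ((continuous_matL2_integrand ρ' τ).continuousOn.integrableOn_compact hT)]
  simp only [Pi.add_apply, map_add, add_mul, Finset.sum_add_distrib]

theorem matL2_smul_left (c : ℝ) (ρ τ : Fin 2 → Fin 2 → MvPolynomial (Fin 2) ℝ) :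
    matL2 T (c • ρ) τ = c * matL2 T ρ τ := by
  simp only [matL2, ← integral_const_mul, Finset.mul_sum, Pi.smul_apply, smul_eval, mul_assoc]

noncomputable def matL2Form (hT : IsCompact T) :
    LinearMap.BilinForm ℝ (Fin 2 → Fin 2 → MvPolynomial (Fin 2) ℝ) :=
  LinearMap.mk₂ ℝ (matL2 T) (matL2_add_left hT)
    (fun c ρ τ => by rw [smul_eq_mul, matL2_smul_left])
    (fun ρ τ τ' => by rw [matL2_comm, matL2_add_left hT, matL2_comm τ, matL2_comm τ'])
    (fun c ρ τ => by rw [smul_eq_mul, matL2_comm, matL2_smul_left, matL2_comm τ])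

theorem eq_zero_of_matL2_self_eq_zero (hT : IsCompact T) (hT' : (interior T).Nonempty)
    {ρ : Fin 2 → Fin 2 → MvPolynomial (Fin 2) ℝ} (h : matL2 T ρ ρ = 0) : ρ = 0 := by
  have hcont := continuous_matL2_integrand ρ ρ
  have hae : (fun x => ∑ a, ∑ b, eval x (ρ a b) * eval x (ρ a b)) =ᵐ[volume.restrict T] 0 :=
    (integral_eq_zero_iff_of_nonneg
      (fun x => Finset.sum_nonneg fun _ _ => Finset.sum_nonneg fun _ _ => mul_self_nonneg _)
      (hcont.continuousOn.integrableOn_compact hT)).1 h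
  have hzero := Measure.eqOn_open_of_ae_eq
    (ae_restrict_of_ae_restrict_of_subset interior_subset hae) isOpen_interior
    hcont.continuousOn continuousOn_const
  funext a b
  refine MvPolynomial.eq_zero_of_isOpen_of_forall_eval_eq_zero isOpen_interior hT' fun x hx => ?_
  have hrow := (Finset.sum_eq_zero_iff_of_nonneg fun _ _ =>
    Finset.sum_nonneg fun _ _ => mul_self_nonneg _).1 (hzero hx) a (Finset.mem_univ a)
  exact mul_self_eq_zero.1 <| (Finset.sum_eq_zero_iff_of_nonneg fun _ _ =>
    mul_self_nonneg _).1 hrow b (Finset.mem_univ b)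

end MatL2

theorem LinearMap.BilinForm.exists_mem_forall_apply_eq {K V : Type*} [Field K] [AddCommGroup V]
    [Module K V] (B : LinearMap.BilinForm K V) (W : Submodule K V) [FiniteDimensional K W]
    (hB : ∀ w ∈ W, B w w = 0 → w = 0) (x : V) : ∃ y ∈ W, ∀ w ∈ W, B x w = B y w := by
  have hinj : Function.Injective (B.restrict W) :=
    LinearMap.ker_eq_bot.1 <| LinearMap.ker_eq_bot'.2 fun w hw =>
      Subtype.ext <| hB w w.2 (LinearMap.congr_fun hw w)
  obtain ⟨y, hy⟩ := (LinearMap.injective_iff_surjective_of_finrank_eq_finrank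
    Subspace.dual_finrank_eq.symm).1 hinj ((B x).domRestrict W)
  exact ⟨y, y.2, fun w hw => (LinearMap.congr_fun hy ⟨w, hw⟩).symm⟩

noncomputable def hessBubbleSubmodule (k : ℕ) (lam : Fin 3 → MvPolynomial (Fin 2) ℝ) :
    Submodule ℝ (Fin 2 → Fin 2 → MvPolynomial (Fin 2) ℝ) :=
  (restrictTotalDegree (Fin 2) ℝ (k - 4)).map <| LinearMap.pi fun a => LinearMap.pi fun b =>
    (pderiv a).toLinearMap ∘ₗ (pderiv b).toLinearMap ∘ₗ
      LinearMap.mulLeft ℝ ((lam 0 * lam 1 * lam 2) ^ 2)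

instance (k : ℕ) (lam : Fin 3 → MvPolynomial (Fin 2) ℝ) :
    FiniteDimensional ℝ (hessBubbleSubmodule k lam) := by
  unfold hessBubbleSubmodule
  infer_instance

theorem coe_hessBubbleSubmodule (k : ℕ) (lam : Fin 3 → MvPolynomial (Fin 2) ℝ) :
    (hessBubbleSubmodule k lam : Set (Fin 2 → Fin 2 → MvPolynomial (Fin 2) ℝ)) =
      hessBubble k lam := by
  ext ρ
  simp [hessBubbleSubmodule, hessBubble, mem_restrictTotalDegree, funext_iff, eq_comm]

theorem exists_isHessProj (k : ℕ) (lam : Fin 3 → MvPolynomial (Fin 2) ℝ)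
    {T : Set (Fin 2 → ℝ)} (hT : IsCompact T) (hT' : (interior T).Nonempty)
    (σ : Fin 2 → Fin 2 → MvPolynomial (Fin 2) ℝ) : ∃ τ, IsHessProj k lam T σ τ := by
  simp only [IsHessProj, ← coe_hessBubbleSubmodule, SetLike.mem_coe]
  exact (matL2Form hT).exists_mem_forall_apply_eq _
    (fun ρ _ hρ => eq_zero_of_matL2_self_eq_zero hT hT' hρ) σ

theorem huZhang_dof_count {k : ℕ} (hk : 1 ≤ k) :
    3 * 3 + 3 * (2 * (k - 1)) + 3 * ((k - 1) * k / 2) = 3 * ((k + 1) * (k + 2) / 2) := by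
  obtain ⟨j, rfl⟩ := Nat.exists_eq_add_of_le' hk
  have : (j + 1 + 1) * (j + 1 + 2) = j * (j + 1) + 2 * (2 * j + 3) := by ring
  rw [Nat.add_sub_cancel, this, Nat.add_mul_div_left _ _ two_pos]
  omega

theorem stmt_17_general (k : ℕ) (hk : 3 ≤ k)
    (v : Fin 3 → Fin 2 → ℝ) (hv : AffineIndependent ℝ v)
    (lam : Fin 3 → MvPolynomial (Fin 2) ℝ)
    -- the interior bilinear form is an inner product on B^{rot;S}_{f,k}
    (hip : ∀ η ∈ rotSBubble k v,
      ∀ τ, IsHessProj k lam (convexHull ℝ (Set.range v)) η τ →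
      matL2 (convexHull ℝ (Set.range v)) τ τ +
        rotL2 (convexHull ℝ (Set.range v)) η η = 0 → η = 0)
    (σ : Fin 2 → Fin 2 → MvPolynomial (Fin 2) ℝ)
    (hσdeg : ∀ a b, (σ a b).totalDegree ≤ k)
    (hσsym : ∀ a b, σ a b = σ b a)
    -- vanishing vertex values
    (hvert : ∀ j a b, eval (v j) (σ a b) = 0)
    -- vanishing edge moments against [(λ0λ1)P_{k-2}(e)]²
    (hedge : ∀ m : Fin 3, ∀ q : Fin 2 → Polynomial ℝ,
      (∀ a, (q a).natDegree ≤ k - 2) →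
      (∫ s in (0:ℝ)..1, ∑ a,
        (∑ b, eval (fun c => v (m + 1) c + s * (v (m + 2) c - v (m + 1) c)) (σ a b) *
          (v (m + 2) b - v (m + 1) b)) * (s * (1 - s) * (q a).eval s)) = 0)
    -- vanishing interior moments
    (hint : ∀ η ∈ rotSBubble k v, ∀ τσ τη,
      IsHessProj k lam (convexHull ℝ (Set.range v)) σ τσ →
      IsHessProj k lam (convexHull ℝ (Set.range v)) η τη →
      matL2 (convexHull ℝ (Set.range v)) τσ τη +
        rotL2 (convexHull ℝ (Set.range v)) σ η = 0) :
    (3 * 3 + 3 * (2 * (k - 1)) + 3 * ((k - 1) * k / 2) = 3 * ((k + 1) * (k + 2) / 2)) ∧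
    σ = 0 := by
  set T := convexHull ℝ (Set.range v)
  have hT : IsCompact T := (Set.finite_range v).isCompact_convexHull ℝ
  have hT' : (interior T).Nonempty := hv.interior_convexHull_nonempty (by simp)
  have hσ : σ ∈ rotSBubble k v := ⟨hσdeg, hσsym, fun m =>
    tangential_trace_eq_zero_of_edge_moments hσdeg (hvert _) (hvert _) (hedge m)⟩
  obtain ⟨τ, hτ⟩ := exists_isHessProj k lam hT hT' σ
  exact ⟨huZhang_dof_count (by omega), hip σ hσ τ hτ (hint σ hσ τ τ hτ hτ)⟩

/-- Unisolvency of the (rotated) Hu–Zhang element of degree `k ≥ 3`: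
the number of degrees of freedom (vertex values, edge moments against
`[(λ0λ1)P_{k-2}(e)]²`, and interior moments on `B^{rot;S}_{f,k}`) equals
`dim P_k(f;S) = 3(k+1)(k+2)/2`, and — provided the interior bilinear form
`(P_{hess B}·, P_{hess B}·) + (rot·, rot·)` is an inner product on
`B^{rot;S}_{f,k}` — any `σ ∈ P_k(f;S)` vanishing at all these degrees of
freedom is zero. -/
theorem stmt_17 (k : ℕ) (hk : 3 ≤ k)
    (v : Fin 3 → Fin 2 → ℝ) (hv : AffineIndependent ℝ v)
    (lam : Fin 3 → MvPolynomial (Fin 2) ℝ)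
    (hdeg : ∀ i, (lam i).totalDegree ≤ 1)
    (heval : ∀ i j, eval (v j) (lam i) = if i = j then 1 else 0)
    -- the interior bilinear form is an inner product on B^{rot;S}_{f,k}
    (hip : ∀ η ∈ rotSBubble k v,
      ∀ τ, IsHessProj k lam (convexHull ℝ (Set.range v)) η τ →
      matL2 (convexHull ℝ (Set.range v)) τ τ +
        rotL2 (convexHull ℝ (Set.range v)) η η = 0 → η = 0)
    (σ : Fin 2 → Fin 2 → MvPolynomial (Fin 2) ℝ)
    (hσdeg : ∀ a b, (σ a b).totalDegree ≤ k)
    (hσsym : ∀ a b, σ a b = σ b a)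
    -- vanishing vertex values
    (hvert : ∀ j a b, eval (v j) (σ a b) = 0)
    -- vanishing edge moments against [(λ0λ1)P_{k-2}(e)]²
    (hedge : ∀ m : Fin 3, ∀ q : Fin 2 → Polynomial ℝ,
      (∀ a, (q a).natDegree ≤ k - 2) →
      (∫ s in (0:ℝ)..1, ∑ a,
        (∑ b, eval (fun c => v (m + 1) c + s * (v (m + 2) c - v (m + 1) c)) (σ a b) *
          (v (m + 2) b - v (m + 1) b)) * (s * (1 - s) * (q a).eval s)) = 0)
    -- vanishing interior moments
    (hint : ∀ η ∈ rotSBubble k v, ∀ τσ τη,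
      IsHessProj k lam (convexHull ℝ (Set.range v)) σ τσ →
      IsHessProj k lam (convexHull ℝ (Set.range v)) η τη →
      matL2 (convexHull ℝ (Set.range v)) τσ τη +
        rotL2 (convexHull ℝ (Set.range v)) σ η = 0) :
    (3 * 3 + 3 * (2 * (k - 1)) + 3 * ((k - 1) * k / 2) = 3 * ((k + 1) * (k + 2) / 2)) ∧
    σ = 0 :=
  stmt_17_general k hk v hv lam hip σ hσdeg hσsym hvert hedge hint
end
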